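/- Suppose Σ_{i=0}^∞ a_i 3^i = Σ_{i=0}^∞ b_i 3^i as 3-adic integers, with a_i ∈ {0, ±1} and b_i ∈ {0,1,2}. Then for every t: a_t ≡ b_t + Σ_{0 ≤ λ < t} b_λ(1 - b_λ) · Π_{λ < i < t} b_i(2 - b_i) (mod 3). -/

import Mathlib

/-!
Compare the truncations `A t = ∑ i < t, a i 3^i` and `B t = ∑ i < t, b i 3^i`. Equality in `ℤ₃`
gives `A t ≡ B t [ZMOD 3^t]`, while `2|A t| < 3^t` and `0 ≤ B t < 3^t`; hence `B t - A t = 3^t c t`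
with a carry `c t ∈ {0, 1}`, `c 0 = 0`, and `a t = b t + c t - 3 c (t+1)`. Modulo 3 this gives
`a t ≡ b t + c t`, and the carry satisfies the linear recurrence
`c (t+1) ≡ b t (1 - b t) + b t (2 - b t) c t`, which unrolls to the stated sum of products.
-/

open Finset

namespace PadicInt

variable {p : ℕ} [Fact p.Prime]

theorem summable_mul_pow (x : ℕ → ℤ_[p]) : Summable fun i => x i * (p : ℤ_[p]) ^ i := by
  refine .of_norm_bounded (summable_geometric_of_lt_one (inv_nonneg.2 p.cast_nonneg)
    (inv_lt_one_of_one_lt₀ (mod_cast (Fact.out : p.Prime).one_lt))) fun i => ?_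
  rw [norm_mul, norm_pow, norm_p]
  exact mul_le_of_le_one_left (by positivity) (x i).norm_le_one

theorem toZModPow_tsum_mul_pow (x : ℕ → ℤ_[p]) (t : ℕ) :
    toZModPow t (∑' i, x i * (p : ℤ_[p]) ^ i) =
      ∑ i ∈ range t, toZModPow t (x i) * (p : ZMod (p ^ t)) ^ i := by
  have htail : ∑' i, x (i + t) * (p : ℤ_[p]) ^ (i + t) =
      p ^ t * ∑' i, x (i + t) * (p : ℤ_[p]) ^ i := by
    rw [← (summable_mul_pow _).tsum_mul_left]
    exact tsum_congr fun i => by ring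
  rw [← (summable_mul_pow x).sum_add_tsum_nat_add t, htail]
  have hpt : (p : ZMod (p ^ t)) ^ t = 0 := by exact_mod_cast ZMod.natCast_self (p ^ t)
  simp [hpt]

theorem sum_range_modEq_of_tsum_eq {x y : ℕ → ℤ}
    (h : ∑' i, (x i : ℤ_[p]) * (p : ℤ_[p]) ^ i = ∑' i, (y i : ℤ_[p]) * (p : ℤ_[p]) ^ i) (t : ℕ) :
    ∑ i ∈ range t, x i * (p : ℤ) ^ i ≡ ∑ i ∈ range t, y i * (p : ℤ) ^ i [ZMOD (p ^ t : ℕ)] := by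
  have := congrArg (toZModPow t) h
  simp only [toZModPow_tsum_mul_pow, map_intCast] at this
  rw [← ZMod.intCast_eq_intCast_iff]
  push_cast
  exact this

end PadicInt

theorem two_mul_abs_sum_range_mul_three_pow_lt {a : ℕ → ℤ} (ha : ∀ i, |a i| ≤ 1) (t : ℕ) :
    2 * |∑ i ∈ range t, a i * 3 ^ i| < 3 ^ t := by
  induction t with
  | zero => simp
  | succ t ih =>
    rw [sum_range_succ, pow_succ]
    have hlast : |a t * 3 ^ t| ≤ 3 ^ t := by
      rw [abs_mul, abs_pow, abs_of_pos (by norm_num : (0 : ℤ) < 3)]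
      exact mul_le_of_le_one_left (by positivity) (ha t)
    linarith [abs_add_le (∑ i ∈ range t, a i * 3 ^ i) (a t * 3 ^ t)]

theorem Nat.sum_range_mul_pow_lt {n : ℕ} {b : ℕ → ℕ} (hb : ∀ i, b i < n) (t : ℕ) :
    ∑ i ∈ range t, b i * n ^ i < n ^ t := by
  induction t with
  | zero => simp
  | succ t ih =>
    rw [sum_range_succ, pow_succ]
    nlinarith [Nat.mul_le_mul_right (n ^ t) (hb t)]

theorem Int.ModEq.sub_eq_zero_or_eq_modulus {m A B : ℤ} (h : A ≡ B [ZMOD m])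
    (hA : 2 * |A| < m) (hB₀ : 0 ≤ B) (hB : B < m) : B - A = 0 ∨ B - A = m := by
  obtain ⟨k, hk⟩ := Int.modEq_iff_dvd.mp h
  have hlo : -1 < k := by nlinarith [neg_abs_le A, le_abs_self A]
  have hhi : k < 2 := by nlinarith [neg_abs_le A, le_abs_self A]
  interval_cases k <;> simp [hk]

theorem eq_sum_mul_prod_of_succ_eq {R : Type*} [CommSemiring R] {u v x : ℕ → R} (h₀ : x 0 = 0)
    (hsucc : ∀ n, x (n + 1) = u n + v n * x n) (t : ℕ) :
    x t = ∑ l ∈ range t, u l * ∏ i ∈ Ioo l t, v i := by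
  induction t with
  | zero => simp [h₀]
  | succ t ih =>
    have hIoo : ∀ l, Ioo l (t + 1) = Ioc l t := fun l => Ioo_succ_right_eq_Ioc l t
    rw [hsucc, ih, sum_range_succ, hIoo, Ioc_self, prod_empty, mul_one, add_comm, mul_sum]
    congr 1
    refine sum_congr rfl fun l hl => ?_
    rw [hIoo, ← Ioo_insert_right (mem_range.mp hl), prod_insert right_notMem_Ioo]
    ring

theorem exists_carry_of_modEq {a : ℕ → ℤ} {b : ℕ → ℕ} (ha : ∀ i, |a i| ≤ 1) (hb : ∀ i, b i < 3)
    (hmod : ∀ t, ∑ i ∈ range t, a i * 3 ^ i ≡ ∑ i ∈ range t, (b i : ℤ) * 3 ^ i [ZMOD (3 : ℤ) ^ t]) :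
    ∃ c : ℕ → ℤ, c 0 = 0 ∧ (∀ t, c t = 0 ∨ c t = 1) ∧ ∀ t, a t = b t + c t - 3 * c (t + 1) := by
  set A : ℕ → ℤ := fun t => ∑ i ∈ range t, a i * 3 ^ i
  set B : ℕ → ℤ := fun t => ∑ i ∈ range t, (b i : ℤ) * 3 ^ i
  have hcarry : ∀ t, ∃ c : ℤ, (c = 0 ∨ c = 1) ∧ B t - A t = 3 ^ t * c := fun t => by
    have hB : B t < 3 ^ t := by simp only [B]; exact_mod_cast Nat.sum_range_mul_pow_lt hb t
    rcases (hmod t).sub_eq_zero_or_eq_modulus (two_mul_abs_sum_range_mul_three_pow_lt ha t)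
      (sum_nonneg fun i _ => by positivity) hB with h | h
    · exact ⟨0, .inl rfl, by rw [h, mul_zero]⟩
    · exact ⟨1, .inr rfl, by rw [h, mul_one]⟩
  choose c hc01 hc using hcarry
  refine ⟨c, by simpa [A, B] using (hc 0).symm, hc01, fun t => ?_⟩
  have hstep : B (t + 1) - A (t + 1) = B t - A t + (b t - a t) * 3 ^ t := by
    simp only [A, B, sum_range_succ]; ring
  rw [hc, hc, pow_succ] at hstep
  have : 3 * c (t + 1) = c t + b t - a t :=
    mul_left_cancel₀ (pow_ne_zero t three_ne_zero) (by linear_combination hstep)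
  linarith

/-- For `b = 0, 1, 2` the outgoing carry is `0`, `c`, `1`; the right-hand side interpolates this
modulo 3. -/
theorem carry_succ_eq {a c c' : ℤ} {b : ℕ} (ha : |a| ≤ 1) (hb : b < 3) (hc : c = 0 ∨ c = 1)
    (hc' : c' = 0 ∨ c' = 1) (hdigit : a = b + c - 3 * c') :
    (c' : ZMod 3) = b * (1 - b) + b * (2 - b) * c := by
  obtain ⟨ha₁, ha₂⟩ := abs_le.mp ha
  interval_cases b <;> rcases hc with rfl | rfl <;> rcases hc' with rfl | rfl <;>
    first | (exfalso; omega) | decide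

/-- Standard to balanced ternary digit transformation. -/
theorem standard_to_balanced_ternary (a : ℕ → ℤ) (b : ℕ → ℕ)
    (ha : ∀ i, |a i| ≤ 1) (hb : ∀ i, b i < 3)
    (heq : (∑' i : ℕ, (a i : ℤ_[3]) * 3 ^ i) = ∑' i : ℕ, (b i : ℤ_[3]) * 3 ^ i) :
    ∀ t, (a t : ZMod 3) = (b t : ZMod 3) +
      ∑ l ∈ Finset.range t,
        (b l : ZMod 3) * (1 - (b l : ZMod 3)) *
          ∏ i ∈ Finset.Ioo l t, (b i : ZMod 3) * (2 - (b i : ZMod 3)) := by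
  have hmod (t : ℕ) := PadicInt.sum_range_modEq_of_tsum_eq (p := 3) (x := a) (y := fun i => b i)
    (by simpa using heq) t
  push_cast at hmod
  obtain ⟨c, hc₀, hc01, hdigit⟩ := exists_carry_of_modEq ha hb hmod
  have hc (t : ℕ) := eq_sum_mul_prod_of_succ_eq (x := fun t => (c t : ZMod 3)) (by simp [hc₀])
    (fun n => carry_succ_eq (ha n) (hb n) (hc01 n) (hc01 (n + 1)) (hdigit n)) t
  intro t
  rw [← hc t, hdigit t]
  push_cast
  rw [show (3 : ZMod 3) = 0 from rfl]
  ring
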